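/- Let d ≥ 2, let T be the d-adic rooted tree, and let 1 ≠ H ⊴ G ≤ Aut T be closed fractal subgroups with H branch. Then G_H is branch and |G_H : H| = |π_D(G_H) : π_D(H)| < ∞, where D is the depth of H as a group of finite type (H, being closed, fractal and branch, is of finite type). -/

import Mathlib

/-!
Common framework: automorphisms of the `d`-adic rooted tree.

Vertices of the `d`-adic rooted tree `T` are finite words over the alphabet `Fin d`
(the root is the empty word `[]`, and the immediate descendants of `v` are the words
`v ++ [i]`).  An automorphism of `T` is a permutation of the vertex set preserving
the length (= level) of words and the prefix (= ancestor) relation.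
-/

namespace ArboGal

/-- An automorphism of the `d`-adic rooted tree. -/
structure TreeAut (d : ℕ) where
  toPerm : Equiv.Perm (List (Fin d))
  length_eq : ∀ v, (toPerm v).length = v.length
  prefix_mono : ∀ v w, v <+: w → toPerm v <+: toPerm w

namespace TreeAut

variable {d : ℕ}

lemma toPerm_injective : Function.Injective (toPerm : TreeAut d → Equiv.Perm (List (Fin d))) := by
  rintro ⟨a, _, _⟩ ⟨b, _, _⟩ h
  simpa using h

lemma symm_length (g : TreeAut d) (v : List (Fin d)) :
    (g.toPerm.symm v).length = v.length := by
  conv_rhs => rw [← Equiv.apply_symm_apply g.toPerm v, g.length_eq]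

lemma symm_prefix (g : TreeAut d) {v w : List (Fin d)} (h : v <+: w) :
    g.toPerm.symm v <+: g.toPerm.symm w := by
  set p := (g.toPerm.symm w).take v.length with hp
  have hpw : p <+: g.toPerm.symm w := List.take_prefix _ _
  have h1 : g.toPerm p <+: w := by
    have h2 := g.prefix_mono _ _ hpw
    rwa [Equiv.apply_symm_apply] at h2
  have hvlen : v.length ≤ w.length := h.length_le
  have hplen : (g.toPerm p).length = v.length := by
    rw [g.length_eq, hp, List.length_take, symm_length]
    omega
  have hgpv : g.toPerm p = v := by
    have e1 := List.prefix_iff_eq_take.mp h1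
    have e2 := List.prefix_iff_eq_take.mp h
    rw [hplen] at e1
    rw [e1, ← e2]
  have hfin : p = g.toPerm.symm v := by
    rw [← hgpv, Equiv.symm_apply_apply]
  rw [← hfin]
  exact hpw

instance : Group (TreeAut d) where
  one := ⟨Equiv.refl _, fun _ => rfl, fun _ _ h => h⟩
  mul g h := ⟨g.toPerm.trans h.toPerm,
    fun v => by simp [Equiv.trans_apply, h.length_eq, g.length_eq],
    fun v w hvw => h.prefix_mono _ _ (g.prefix_mono _ _ hvw)⟩
  inv g := ⟨g.toPerm.symm, g.symm_length, fun _ _ h => g.symm_prefix h⟩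
  mul_assoc a b c := toPerm_injective rfl
  one_mul a := toPerm_injective (Equiv.ext fun _ => rfl)
  mul_one a := toPerm_injective (Equiv.ext fun _ => rfl)
  inv_mul_cancel a := toPerm_injective (Equiv.symm_trans_self a.toPerm)

@[simp] lemma mul_toPerm (g h : TreeAut d) : (g * h).toPerm = g.toPerm.trans h.toPerm := rfl
@[simp] lemma one_toPerm : (1 : TreeAut d).toPerm = Equiv.refl _ := rfl
@[simp] lemma inv_toPerm (g : TreeAut d) : (g⁻¹).toPerm = g.toPerm.symm := rfl

lemma apply_append (g : TreeAut d) (v w : List (Fin d)) :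
    g.toPerm (v ++ w) = g.toPerm v ++ (g.toPerm (v ++ w)).drop v.length := by
  obtain ⟨s, hs⟩ := g.prefix_mono v (v ++ w) (List.prefix_append v w)
  rw [← hs]
  congr 1
  rw [← g.length_eq v]
  exact List.drop_left.symm

/-- The section `g|_v` of `g` at the vertex `v` : the unique automorphism of `T` with
`(v ++ w)^g = v^g ++ w^(g|_v)` for all words `w`. -/
def sect (g : TreeAut d) (v : List (Fin d)) : TreeAut d where
  toPerm :=
    { toFun := fun w => (g.toPerm (v ++ w)).drop v.length
      invFun := fun w => (g.toPerm.symm (g.toPerm v ++ w)).drop v.length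
      left_inv := by
        intro w
        show (g.toPerm.symm (g.toPerm v ++ (g.toPerm (v ++ w)).drop v.length)).drop v.length = w
        rw [← apply_append g v w, Equiv.symm_apply_apply, List.drop_left]
      right_inv := by
        intro w
        set u := g.toPerm.symm (g.toPerm v ++ w) with hu
        have hvu : v <+: u := by
          have h2 : g.toPerm.symm (g.toPerm v) <+: u := g.symm_prefix (List.prefix_append _ _)
          rwa [Equiv.symm_apply_apply] at h2
        have hrecon : v ++ u.drop v.length = u := by
          obtain ⟨s, hs⟩ := hvu
          rw [← hs, List.drop_left]
        show (g.toPerm (v ++ u.drop v.length)).drop v.length = w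
        rw [hrecon, hu, Equiv.apply_symm_apply, ← g.length_eq v, List.drop_left] }
  length_eq := fun w => by
    show ((g.toPerm (v ++ w)).drop v.length).length = w.length
    rw [List.length_drop, g.length_eq, List.length_append]
    omega
  prefix_mono := by
    intro w₁ w₂ h
    have h2 : g.toPerm (v ++ w₁) <+: g.toPerm (v ++ w₂) := by
      apply g.prefix_mono
      obtain ⟨s, rfl⟩ := h
      rw [← List.append_assoc]
      exact List.prefix_append _ _
    show (g.toPerm (v ++ w₁)).drop v.length <+: (g.toPerm (v ++ w₂)).drop v.length
    rw [apply_append g v w₁, apply_append g v w₂] at h2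
    exact (List.prefix_append_right_inj _).mp h2

@[simp] lemma sect_apply (g : TreeAut d) (v w : List (Fin d)) :
    (sect g v).toPerm w = (g.toPerm (v ++ w)).drop v.length := rfl

lemma concat_of_prefix_succ {α : Type*} {l₁ l₂ : List α} (h : l₁ <+: l₂)
    (hl : l₂.length = l₁.length + 1) (x : α) : l₂ = l₁ ++ [l₂.getLastD x] := by
  obtain ⟨s, rfl⟩ := h
  have hs : s.length = 1 := by
    rw [List.length_append] at hl
    omega
  obtain ⟨a, rfl⟩ := List.length_eq_one_iff.mp hs
  rw [List.getLastD_concat]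

lemma apply_child (g : TreeAut d) (v : List (Fin d)) (i : Fin d) :
    g.toPerm (v ++ [i]) = g.toPerm v ++ [(g.toPerm (v ++ [i])).getLastD i] := by
  apply concat_of_prefix_succ (g.prefix_mono v _ (List.prefix_append _ _))
  rw [g.length_eq, g.length_eq, List.length_append, List.length_singleton]

/-- The label `g|_v^1` of `g` at the vertex `v`, i.e. the permutation induced by `g` on the
immediate descendants of `v` (identified with `Fin d`): `(v ++ [i])^g = v^g ++ [(label g v) i]`. -/
def label (g : TreeAut d) (v : List (Fin d)) : Equiv.Perm (Fin d) where
  toFun i := (g.toPerm (v ++ [i])).getLastD i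
  invFun j := (g.toPerm.symm (g.toPerm v ++ [j])).getLastD j
  left_inv := by
    intro i
    show (g.toPerm.symm (g.toPerm v ++ [(g.toPerm (v ++ [i])).getLastD i])).getLastD _ = i
    rw [← apply_child, Equiv.symm_apply_apply, List.getLastD_concat]
  right_inv := by
    intro j
    set u := g.toPerm.symm (g.toPerm v ++ [j]) with hu
    have hvu : v <+: u := by
      have h2 : g.toPerm.symm (g.toPerm v) <+: u := g.symm_prefix (List.prefix_append _ _)
      rwa [Equiv.symm_apply_apply] at h2
    have hlen : u.length = v.length + 1 := by
      rw [hu, symm_length, List.length_append, g.length_eq, List.length_singleton]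
    have h3 : u = v ++ [u.getLastD j] := concat_of_prefix_succ hvu hlen j
    show (g.toPerm (v ++ [u.getLastD j])).getLastD (u.getLastD j) = j
    rw [← h3, hu, Equiv.apply_symm_apply, List.getLastD_concat]

lemma label_apply (g : TreeAut d) (v : List (Fin d)) (i : Fin d) :
    label g v i = (g.toPerm (v ++ [i])).getLastD i := rfl

lemma apply_concat (g : TreeAut d) (v : List (Fin d)) (i : Fin d) :
    g.toPerm (v ++ [i]) = g.toPerm v ++ [label g v i] := apply_child g v i

end TreeAut

open TreeAut

/-! ### Portraits

Every assignment of a permutation of `Fin d` (a "label") to each vertex determines a unique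
automorphism of the `d`-adic tree; this is used to construct explicit automorphisms. -/

/-- Auxiliary function for `ofPortrait`. -/
def pf (c : List (Fin d) → Equiv.Perm (Fin d)) : List (Fin d) → List (Fin d) → List (Fin d)
  | _, [] => []
  | v, i :: w => c v i :: pf c (v ++ [i]) w

/-- Auxiliary inverse function for `ofPortrait`. -/
def pfInv (c : List (Fin d) → Equiv.Perm (Fin d)) : List (Fin d) → List (Fin d) → List (Fin d)
  | _, [] => []
  | v, j :: w => (c v)⁻¹ j :: pfInv c (v ++ [(c v)⁻¹ j]) w

lemma pf_leftInv (c : List (Fin d) → Equiv.Perm (Fin d)) :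
    ∀ (w v : List (Fin d)), pfInv c v (pf c v w) = w := by
  intro w
  induction w with
  | nil => intro v; rfl
  | cons i w ih =>
      intro v
      show (c v)⁻¹ (c v i) :: pfInv c (v ++ [(c v)⁻¹ (c v i)]) (pf c (v ++ [i]) w) = i :: w
      rw [show (c v)⁻¹ (c v i) = i from (c v).symm_apply_apply i, ih]

lemma pf_rightInv (c : List (Fin d) → Equiv.Perm (Fin d)) :
    ∀ (w v : List (Fin d)), pf c v (pfInv c v w) = w := by
  intro w
  induction w with
  | nil => intro v; rfl
  | cons j w ih =>
      intro v
      show c v ((c v)⁻¹ j) :: pf c (v ++ [(c v)⁻¹ j]) (pfInv c (v ++ [(c v)⁻¹ j]) w) = j :: w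
      rw [show c v ((c v)⁻¹ j) = j from (c v).apply_symm_apply j, ih]

lemma pf_length (c : List (Fin d) → Equiv.Perm (Fin d)) :
    ∀ (w v : List (Fin d)), (pf c v w).length = w.length := by
  intro w
  induction w with
  | nil => intro v; rfl
  | cons i w ih =>
      intro v
      show (c v i :: pf c (v ++ [i]) w).length = w.length + 1
      rw [List.length_cons, ih]

lemma pf_append (c : List (Fin d) → Equiv.Perm (Fin d)) :
    ∀ (a b v : List (Fin d)), pf c v (a ++ b) = pf c v a ++ pf c (v ++ a) b := by
  intro a
  induction a with
  | nil => intro b v; simp [pf]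
  | cons i a ih =>
      intro b v
      show c v i :: pf c (v ++ [i]) (a ++ b) = (c v i :: pf c (v ++ [i]) a) ++ pf c (v ++ i :: a) b
      rw [ih, List.cons_append, ← List.append_cons]

/-- The automorphism of the `d`-adic tree whose label at each vertex `v` is `c v`. -/
def ofPortrait (c : List (Fin d) → Equiv.Perm (Fin d)) : TreeAut d where
  toPerm := ⟨pf c [], pfInv c [], fun w => pf_leftInv c w [], fun w => pf_rightInv c w []⟩
  length_eq := fun v => pf_length c v []
  prefix_mono := by
    intro v w h
    obtain ⟨s, rfl⟩ := h
    change pf c [] v <+: pf c [] (v ++ s)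
    rw [pf_append]
    exact ⟨pf c ([] ++ v) s, rfl⟩

lemma ofPortrait_label (c : List (Fin d) → Equiv.Perm (Fin d)) (v : List (Fin d)) :
    label (ofPortrait c) v = c v := by
  apply Equiv.ext
  intro i
  show ((ofPortrait c).toPerm (v ++ [i])).getLastD i = (c v) i
  have h1 : (ofPortrait c).toPerm (v ++ [i]) = pf c [] (v ++ [i]) := rfl
  rw [h1, pf_append]
  have h2 : pf c ([] ++ v) [i] = [c v i] := by simp [pf]
  rw [h2, List.getLastD_concat]


open TreeAut

section Predicates

variable {d : ℕ}

/-- A set of tree automorphisms is *self-similar* if it is closed under taking sections. -/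
def SelfSimilarS (S : Set (TreeAut d)) : Prop :=
  ∀ g ∈ S, ∀ v : List (Fin d), sect g v ∈ S

/-- A set of tree automorphisms is *level-transitive* if it acts transitively on each
level of the tree. -/
def LevelTrans (S : Set (TreeAut d)) : Prop :=
  ∀ v w : List (Fin d), v.length = w.length → ∃ g ∈ S, g.toPerm v = w

/-- `φ_v(st_S(v))`: the set of sections at `v` of the elements of `S` stabilizing `v`. -/
def vertexSections (S : Set (TreeAut d)) (v : List (Fin d)) : Set (TreeAut d) :=
  {x | ∃ g ∈ S, g.toPerm v = v ∧ sect g v = x}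

/-- A set of tree automorphisms is *fractal* if it is self-similar, level-transitive and
`φ_v(st_S(v)) = S` for every vertex `v`. -/
def FractalS (S : Set (TreeAut d)) : Prop :=
  SelfSimilarS S ∧ LevelTrans S ∧ ∀ v : List (Fin d), vertexSections S v = S

/-- The intermediate group `G_H = {g ∈ G ∣ (g|_v)(g|_w)⁻¹ ∈ H for all vertices v, w}`. -/
def GHset (G H : Set (TreeAut d)) : Set (TreeAut d) :=
  {g ∈ G | ∀ v w : List (Fin d), sect g v * (sect g w)⁻¹ ∈ H}

/-- Two automorphisms agree on all vertices of level at most `n`. -/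
def agreeUpTo (n : ℕ) (g h : TreeAut d) : Prop :=
  ∀ v : List (Fin d), v.length ≤ n → g.toPerm v = h.toPerm v

/-- A set of tree automorphisms is *closed* (in the congruence = profinite topology of
`Aut T`) if it contains every automorphism that can be approximated up to every level by
elements of the set. -/
def CongrClosedS (S : Set (TreeAut d)) : Prop :=
  ∀ g : TreeAut d, (∀ n : ℕ, ∃ h ∈ S, agreeUpTo n g h) → g ∈ S

/-- The closure of a subgroup of `Aut T` in the congruence (profinite) topology. -/
def congrClosure (Γ : Subgroup (TreeAut d)) : Subgroup (TreeAut d) where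
  carrier := {g | ∀ n : ℕ, ∃ h ∈ Γ, agreeUpTo n g h}
  one_mem' := fun n => ⟨1, Γ.one_mem, fun _ _ => rfl⟩
  mul_mem' := by
    intro a b ha hb n
    obtain ⟨x, hx, hax⟩ := ha n
    obtain ⟨y, hy, hby⟩ := hb n
    refine ⟨x * y, Γ.mul_mem hx hy, fun v hv => ?_⟩
    show b.toPerm (a.toPerm v) = y.toPerm (x.toPerm v)
    rw [hax v hv]
    exact hby _ (by rw [x.length_eq]; exact hv)
  inv_mem' := by
    intro a ha n
    obtain ⟨x, hx, hax⟩ := ha n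
    refine ⟨x⁻¹, Γ.inv_mem hx, fun v hv => ?_⟩
    show a.toPerm.symm v = x.toPerm.symm v
    apply a.toPerm.injective
    rw [Equiv.apply_symm_apply]
    rw [hax (x.toPerm.symm v) (by rw [x.symm_length]; exact hv)]
    exact (Equiv.apply_symm_apply _ _).symm

/-- The action `π_n(g)` of `g` on the `n`-th level of the tree. -/
def lmap (n : ℕ) (g : TreeAut d) :
    {v : List (Fin d) // v.length = n} → {v : List (Fin d) // v.length = n} :=
  fun v => ⟨g.toPerm v.1, by rw [g.length_eq]; exact v.2⟩

/-- The image `π_n(S)` of a set of tree automorphisms on the `n`-th level of the tree.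
(An automorphism of the truncated tree `T^n` is uniquely determined by its action on the
`n`-th level, so this faithfully encodes the action on `T^n`.) -/
def levelImage (n : ℕ) (S : Set (TreeAut d)) :
    Set ({v : List (Fin d) // v.length = n} → {v : List (Fin d) // v.length = n}) :=
  lmap n '' S

/-- The proportion of elements of `π_n(S)` fixing some vertex at level `n`. -/
noncomputable def fixRatio (S : Set (TreeAut d)) (n : ℕ) : ℝ :=
  (Set.ncard {q ∈ levelImage n S | ∃ v, q v = v} : ℝ) / (Set.ncard (levelImage n S) : ℝ)

/-- The fixed-point proportion
`FPP(S) = lim_n #{g ∈ π_n(S) : g fixes a vertex at level n} / |π_n(S)|`. -/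
noncomputable def FPP (S : Set (TreeAut d)) : ℝ :=
  Filter.limUnder Filter.atTop (fixRatio S)

/-- The fixed-point process: `Xfix n g` is the number of vertices at level `n` fixed by `g`. -/
noncomputable def Xfix (n : ℕ) (g : TreeAut d) : ℕ :=
  Set.ncard {v : List (Fin d) | v.length = n ∧ g.toPerm v = v}

/-- The Hausdorff dimension of a (closed) subgroup of `Aut T`,
`hdim(S) = liminf_n log|π_n(S)| / log|π_n(Aut T)|`. -/
noncomputable def hdim (S : Set (TreeAut d)) : ℝ :=
  Filter.liminf
    (fun n => Real.log (Set.ncard (levelImage n S)) /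
      Real.log (Set.ncard (levelImage n (Set.univ : Set (TreeAut d)))))
    Filter.atTop

/-- The Haar measure (in the ambient closed group `G`) of the closure of a subset `S ⊆ G`:
for a closed subgroup `G ≤ Aut T` with Haar probability measure `μ_G` and a subset `S`
whose defining condition is closed, `μ_G(S) = lim_n |π_n(S)|/|π_n(G)| = inf_n |π_n(S)|/|π_n(G)|`
(the sequence is non-increasing). -/
noncomputable def relDensity (G S : Set (TreeAut d)) : ℝ :=
  ⨅ n : ℕ, (Set.ncard (levelImage n S) : ℝ) / (Set.ncard (levelImage n G) : ℝ)

/-- The rigid vertex stabilizer `rist_S(v)`: elements of `S` fixing every vertex that is not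
a descendant of `v`. -/
def ristS (S : Set (TreeAut d)) (v : List (Fin d)) : Set (TreeAut d) :=
  {g ∈ S | ∀ w : List (Fin d), ¬ v <+: w → g.toPerm w = w}

/-- The rigid level stabilizer `Rist_S(n)`: the product of the rigid vertex stabilizers of the
vertices at level `n`.  (An automorphism belongs to this product iff it fixes all vertices up
to level `n` and, below each vertex `v` of level `n`, it agrees with some element of
`rist_S(v)`.) -/
def RistProd (S : Set (TreeAut d)) (n : ℕ) : Set (TreeAut d) :=
  {g ∈ S | (∀ w : List (Fin d), w.length ≤ n → g.toPerm w = w) ∧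
    ∀ v : List (Fin d), v.length = n → ∃ h ∈ ristS S v, sect h v = sect g v}

/-- `R` has finite index in `S`: finitely many right cosets of `R` cover `S`. -/
def FiniteIndexIn (R S : Set (TreeAut d)) : Prop :=
  ∃ T : Finset (TreeAut d), ∀ g ∈ S, ∃ t ∈ T, ∃ r ∈ R, g = r * t

/-- A set of tree automorphisms is *branch* if it is level-transitive and all its rigid level
stabilizers have finite index in it. -/
def BranchS (S : Set (TreeAut d)) : Prop :=
  LevelTrans S ∧ ∀ n : ℕ, 1 ≤ n → FiniteIndexIn (RistProd S n) S

/-- A closed level-transitive group `S` is of *finite type of depth `D`* if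
`S = {g ∈ Aut T ∣ g|_v^D ∈ π_D(S) for all vertices v}`, where `g|_v^D = π_D(g|_v)` is the
depth-`D` section of `g` at `v`. -/
def FiniteType (S : Set (TreeAut d)) (D : ℕ) : Prop :=
  S = {g : TreeAut d | ∀ v : List (Fin d), lmap D (sect g v) ∈ levelImage D S}

/-- The set of right cosets `{H·g : g ∈ S}` (so its cardinality is the index `|S : H|`
when `H ≤ S` are groups). -/
def rightCosets (H S : Set (TreeAut d)) : Set (Set (TreeAut d)) :=
  {C | ∃ g ∈ S, C = {x | ∃ h ∈ H, x = h * g}}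

/-- The set of cosets `{π_D(H)·π_D(g) : g ∈ S}` of `π_D(H)` in `π_D(S)`. -/
def lvlCosets (D : ℕ) (H S : Set (TreeAut d)) :
    Set (Set ({v : List (Fin d) // v.length = D} → {v : List (Fin d) // v.length = D})) :=
  {C | ∃ g ∈ S, C = {q | ∃ h ∈ H, q = lmap D (h * g)}}

/-- The label of `g` at the root: the action `π_1(g)` of `g` on the first level. -/
def rootLabel (g : TreeAut d) : Equiv.Perm (Fin d) := label g []

/-- The action `π_1(S)` of a set of tree automorphisms on the first level. -/
def rootImage (S : Set (TreeAut d)) : Set (Equiv.Perm (Fin d)) := rootLabel '' S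

/-- The set of cosets of `π_1(H)` in `π_1(S)`, i.e. the quotient `Q = π_1(S)/π_1(H)`. -/
def rootCosets (H S : Set (TreeAut d)) : Set (Set (Equiv.Perm (Fin d))) :=
  {C | ∃ a ∈ rootImage S, C = {x | ∃ b ∈ rootImage H, x = b * a}}

/-- The level-`n` vertex of the end (infinite rooted path) `γ`. -/
def pathPrefix (γ : ℕ → Fin d) (n : ℕ) : List (Fin d) :=
  List.ofFn (fun k : Fin n => γ k)

end Predicates



/-! ### Auxiliary lemmas added for the proof -/

section Aux

variable {d : ℕ}

open TreeAut

lemma TreeAut.ext' {g h : TreeAut d} (H : ∀ v, g.toPerm v = h.toPerm v) : g = h :=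
  TreeAut.toPerm_injective (Equiv.ext H)

lemma sect_nil (g : TreeAut d) : sect g [] = g := by
  apply TreeAut.ext'
  intro v
  show (g.toPerm ([] ++ v)).drop ([] : List (Fin d)).length = g.toPerm v
  simp

lemma sect_one (v : List (Fin d)) : sect (1 : TreeAut d) v = 1 := by
  apply TreeAut.ext'
  intro w
  show ((1 : TreeAut d).toPerm (v ++ w)).drop v.length = w
  simp

lemma sect_mul (g h : TreeAut d) (v : List (Fin d)) :
    sect (g * h) v = sect g v * sect h (g.toPerm v) := by
  apply TreeAut.ext'
  intro w
  show ((g * h).toPerm (v ++ w)).drop v.length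
      = (h.toPerm (g.toPerm v ++ (sect g v).toPerm w)).drop (g.toPerm v).length
  rw [g.length_eq v, sect_apply, ← apply_append g v w]
  rfl

lemma sect_inv (a : TreeAut d) (v : List (Fin d)) :
    sect a⁻¹ v = (sect a (a⁻¹.toPerm v))⁻¹ := by
  have h := sect_mul a⁻¹ a v
  rw [inv_mul_cancel, sect_one] at h
  exact eq_inv_of_mul_eq_one_left h.symm

lemma lmap_mul (n : ℕ) (a b : TreeAut d)
    (v : {v : List (Fin d) // v.length = n}) :
    lmap n (a * b) v = lmap n b (lmap n a v) := rfl

lemma lmap_congr_left {n : ℕ} {a b : TreeAut d} (hl : lmap n a = lmap n b)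
    (c : TreeAut d) : lmap n (a * c) = lmap n (b * c) := by
  funext v
  apply Subtype.ext
  have h2 : a.toPerm v.1 = b.toPerm v.1 := congrArg Subtype.val (congrFun hl v)
  show c.toPerm (a.toPerm v.1) = c.toPerm (b.toPerm v.1)
  rw [h2]

lemma lmap_congr_right {n : ℕ} {g h : TreeAut d} (hl : lmap n g = lmap n h)
    (y : TreeAut d) : lmap n (y * g) = lmap n (y * h) := by
  funext v
  apply Subtype.ext
  have h2 := congrArg Subtype.val
    (congrFun hl ⟨y.toPerm v.1, by rw [y.length_eq]; exact v.2⟩)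
  exact h2

instance instFiniteLevel (n : ℕ) : Finite {v : List (Fin d) // v.length = n} :=
  (List.finite_length_eq (Fin d) n).to_subtype

end Aux

/-- Let `d ≥ 2`, let `T` be the `d`-adic rooted tree, and let
`1 ≠ H ⊴ G ≤ Aut T` be closed fractal subgroups with `H` branch.  Then `G_H` is branch and
`|G_H : H| = |π_D(G_H) : π_D(H)| < ∞`, where `D` is the depth of `H` as a group of finite
type (`H`, being closed, fractal and branch, is of finite type). -/
theorem GH_branch_finite_index
    {d : ℕ} (hd : 2 ≤ d) (G H : Subgroup (TreeAut d))
    (hH_ne : H ≠ ⊥) (hHG : H ≤ G)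
    (hnormal : ∀ g ∈ G, ∀ h ∈ H, g⁻¹ * h * g ∈ H)
    (hclG : CongrClosedS (G : Set (TreeAut d)))
    (hclH : CongrClosedS (H : Set (TreeAut d)))
    (hfrG : FractalS (G : Set (TreeAut d)))
    (hfrH : FractalS (H : Set (TreeAut d)))
    (hbrH : BranchS (H : Set (TreeAut d)))
    -- `D` is the depth of `H` as a group of finite type:
    (D : ℕ) (hD : 1 ≤ D) (hft : FiniteType (H : Set (TreeAut d)) D)
    (hDmin : ∀ D' : ℕ, 1 ≤ D' → FiniteType (H : Set (TreeAut d)) D' → D ≤ D') :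
    -- `G_H` is branch:
    BranchS (GHset (G : Set (TreeAut d)) (H : Set (TreeAut d))) ∧
    -- `|G_H : H| < ∞`:
    (rightCosets (H : Set (TreeAut d))
      (GHset (G : Set (TreeAut d)) (H : Set (TreeAut d)))).Finite ∧
    -- `|G_H : H| = |π_D(G_H) : π_D(H)|`:
    (rightCosets (H : Set (TreeAut d))
      (GHset (G : Set (TreeAut d)) (H : Set (TreeAut d)))).ncard =
      (lvlCosets D (H : Set (TreeAut d))
        (GHset (G : Set (TreeAut d)) (H : Set (TreeAut d)))).ncard := by
  classical
  open scoped Pointwise in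
  have hGss : SelfSimilarS (G : Set (TreeAut d)) := hfrG.1
  have hHss : SelfSimilarS (H : Set (TreeAut d)) := hfrH.1
  set S := GHset (G : Set (TreeAut d)) (H : Set (TreeAut d)) with hSdef
  -- H ⊆ G_H
  have hHsubS : (H : Set (TreeAut d)) ⊆ S := by
    intro h hh
    exact ⟨hHG hh, fun v w => H.mul_mem (hHss h hh v) (H.inv_mem (hHss h hh w))⟩
  -- G_H is closed under multiplication
  have hSmul : ∀ a ∈ S, ∀ b ∈ S, a * b ∈ S := by
    rintro a ⟨haG, haH⟩ b ⟨hbG, hbH⟩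
    refine ⟨G.mul_mem haG hbG, fun v w => ?_⟩
    rw [sect_mul, sect_mul]
    have h1 : sect b (a.toPerm v) * (sect b (a.toPerm w))⁻¹ ∈ H := hbH _ _
    have h2 : sect a v * (sect a w)⁻¹ ∈ H := haH v w
    have h3 : sect a w ∈ G := hGss a haG w
    have key : sect a v * sect b (a.toPerm v) * (sect a w * sect b (a.toPerm w))⁻¹
        = (sect a v * (sect a w)⁻¹) *
          (((sect a w)⁻¹)⁻¹ * (sect b (a.toPerm v) * (sect b (a.toPerm w))⁻¹)
            * (sect a w)⁻¹) := by
      group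
    rw [key]
    exact H.mul_mem h2 (hnormal _ (G.inv_mem h3) _ h1)
  -- G_H is closed under inverses
  have hSinv : ∀ a ∈ S, a⁻¹ ∈ S := by
    rintro a ⟨haG, haH⟩
    refine ⟨G.inv_mem haG, fun v w => ?_⟩
    rw [sect_inv, sect_inv]
    have h1 : sect a (a⁻¹.toPerm w) * (sect a (a⁻¹.toPerm v))⁻¹ ∈ H := haH _ _
    have h3 : sect a (a⁻¹.toPerm v) ∈ G := hGss a haG _
    have key : (sect a (a⁻¹.toPerm v))⁻¹ * ((sect a (a⁻¹.toPerm w))⁻¹)⁻¹ =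
        (sect a (a⁻¹.toPerm v))⁻¹ *
          (sect a (a⁻¹.toPerm w) * (sect a (a⁻¹.toPerm v))⁻¹) *
          (sect a (a⁻¹.toPerm v)) := by group
    rw [key]
    exact hnormal _ h3 _ h1
  -- key lemma: an element of G_H whose level-D action lies in π_D(H) belongs to H
  have hft2 : (H : Set (TreeAut d)) =
      {g : TreeAut d | ∀ v : List (Fin d),
        lmap D (sect g v) ∈ levelImage D (H : Set (TreeAut d))} := hft
  have hkey : ∀ g ∈ S, ∀ h ∈ H, lmap D g = lmap D h → g ∈ H := by
    rintro g ⟨hgG, hgH⟩ h hh hl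
    have hx : g * h⁻¹ ∈ (H : Set (TreeAut d)) := by
      rw [hft2]
      intro v
      have ha : sect g v * g⁻¹ ∈ H := by
        have := hgH v []
        rwa [sect_nil] at this
      have hb : sect h⁻¹ (g.toPerm v) ∈ H := hHss h⁻¹ (H.inv_mem hh) _
      have hc : (g⁻¹)⁻¹ * sect h⁻¹ (g.toPerm v) * g⁻¹ ∈ H :=
        hnormal g⁻¹ (G.inv_mem hgG) _ hb
      have heq : sect (g * h⁻¹) v =
          ((sect g v * g⁻¹) * ((g⁻¹)⁻¹ * sect h⁻¹ (g.toPerm v) * g⁻¹)) * g := by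
        rw [sect_mul]; group
      rw [heq, lmap_congr_right hl]
      exact ⟨_, H.mul_mem (H.mul_mem ha hc) hh, rfl⟩
    have hgeq : (g * h⁻¹) * h = g := by group
    rw [← hgeq]
    exact H.mul_mem hx hh
  -- the image of a right coset at level D
  have hFcoset : ∀ g : TreeAut d,
      lmap D '' {x | ∃ h ∈ (H : Set (TreeAut d)), x = h * g} =
        {q | ∃ h ∈ (H : Set (TreeAut d)), q = lmap D (h * g)} := by
    intro g
    ext q
    constructor
    · rintro ⟨x, ⟨h, hh, rfl⟩, rfl⟩
      exact ⟨h, hh, rfl⟩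
    · rintro ⟨h, hh, rfl⟩
      exact ⟨h * g, ⟨h, hh, rfl⟩, rfl⟩
  -- injectivity of the coset map
  have hinj : Set.InjOn (Set.image (lmap D)) (rightCosets (H : Set (TreeAut d)) S) := by
    rintro C1 ⟨g1, hg1, rfl⟩ C2 ⟨g2, hg2, rfl⟩ hFC
    rw [hFcoset, hFcoset] at hFC
    have hmem : lmap D g1 ∈ {q | ∃ h ∈ (H : Set (TreeAut d)), q = lmap D (h * g2)} := by
      rw [← hFC]
      exact ⟨1, H.one_mem, by rw [one_mul]⟩
    obtain ⟨h, hh, hl⟩ := hmem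
    have hleq : lmap D (g1 * g2⁻¹) = lmap D h := by
      have h2 := lmap_congr_left hl g2⁻¹
      have h3 : (h * g2) * g2⁻¹ = h := by group
      rwa [h3] at h2
    have hk : g1 * g2⁻¹ ∈ H :=
      hkey _ (hSmul g1 hg1 g2⁻¹ (hSinv g2 hg2)) h hh hleq
    ext x
    simp only [Set.mem_setOf_eq]
    constructor
    · rintro ⟨h', hh', rfl⟩
      exact ⟨h' * (g1 * g2⁻¹), H.mul_mem hh' hk, by group⟩
    · rintro ⟨h', hh', rfl⟩
      exact ⟨h' * (g1 * g2⁻¹)⁻¹, H.mul_mem hh' (H.inv_mem hk), by group⟩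
  -- image of the right cosets is the level cosets
  have himg : Set.image (lmap D) '' (rightCosets (H : Set (TreeAut d)) S) =
      lvlCosets D (H : Set (TreeAut d)) S := by
    ext C'
    constructor
    · rintro ⟨C, ⟨g, hg, rfl⟩, rfl⟩
      exact ⟨g, hg, hFcoset g⟩
    · rintro ⟨g, hg, rfl⟩
      exact ⟨{x | ∃ h ∈ (H : Set (TreeAut d)), x = h * g}, ⟨g, hg, rfl⟩, hFcoset g⟩
  -- finiteness
  have hfin : (rightCosets (H : Set (TreeAut d)) S).Finite :=
    Set.Finite.of_finite_image (Set.toFinite _) hinj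
  -- cardinality equality
  have hcard : (rightCosets (H : Set (TreeAut d)) S).ncard =
      (lvlCosets D (H : Set (TreeAut d)) S).ncard := by
    rw [← himg, Set.ncard_image_of_injOn hinj]
  -- level transitivity of G_H
  have hlt : LevelTrans S := by
    intro v w hlen
    obtain ⟨g, hg, hgv⟩ := hbrH.1 v w hlen
    exact ⟨g, hHsubS hg, hgv⟩
  -- H has finite index in G_H
  have hHfin : FiniteIndexIn (H : Set (TreeAut d)) S := by
    have hrep : ∀ C ∈ rightCosets (H : Set (TreeAut d)) S,
        ∃ g, g ∈ S ∧ C = {x | ∃ h ∈ (H : Set (TreeAut d)), x = h * g} := by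
      rintro C ⟨g, hg, rfl⟩
      exact ⟨g, hg, rfl⟩
    let f : Set (TreeAut d) → TreeAut d := fun C =>
      if hC : C ∈ rightCosets (H : Set (TreeAut d)) S then (hrep C hC).choose else 1
    refine ⟨hfin.toFinset.image f, fun g hg => ?_⟩
    have hCrc : {x | ∃ h ∈ (H : Set (TreeAut d)), x = h * g} ∈
        rightCosets (H : Set (TreeAut d)) S := ⟨g, hg, rfl⟩
    set C := {x | ∃ h ∈ (H : Set (TreeAut d)), x = h * g} with hCd
    have hfC := (hrep C hCrc).choose_spec
    have hfCdef : f C = (hrep C hCrc).choose := dif_pos hCrc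
    have hgC : g ∈ C := ⟨1, H.one_mem, (one_mul g).symm⟩
    rw [hfC.2] at hgC
    obtain ⟨h, hh, hgh⟩ := hgC
    exact ⟨f C, Finset.mem_image_of_mem f (hfin.mem_toFinset.mpr hCrc), h, hh,
      by rw [hfCdef]; exact hgh⟩
  -- rigid level stabilizers of H are contained in those of G_H
  have hRsub : ∀ n : ℕ, RistProd (H : Set (TreeAut d)) n ⊆ RistProd S n := by
    rintro n g ⟨hgH, hfix, hsect⟩
    refine ⟨hHsubS hgH, hfix, fun v hv => ?_⟩
    obtain ⟨h, ⟨hhH, hhfix⟩, hhs⟩ := hsect v hv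
    exact ⟨h, ⟨hHsubS hhH, hhfix⟩, hhs⟩
  refine ⟨⟨hlt, fun n hn => ?_⟩, hfin, hcard⟩
  obtain ⟨T₂, hT₂⟩ := hbrH.2 n hn
  obtain ⟨T₁, hT₁⟩ := hHfin
  refine ⟨T₂ * T₁, fun g hg => ?_⟩
  obtain ⟨t₁, ht₁, h, hh, hght⟩ := hT₁ g hg
  obtain ⟨t₂, ht₂, r, hr, hhrt⟩ := hT₂ h hh
  refine ⟨t₂ * t₁, Finset.mul_mem_mul ht₂ ht₁, r, hRsub n hr, ?_⟩
  rw [hght, hhrt, mul_assoc]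


end ArboGal
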